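/- arXiv:2503.08038 — 2 statements merged into one kernel-verified Lean document; each statement's English description precedes it below -/
import Mathlib

section
/- Let C ≥ 1 and fix o_n ∈ ℝ^C. Define h : ℝ^C → ℝ by h(o_m) = L_KL(o_m, o_n). Then for every o_m ∈ ℝ^C and every index i, ∂h/∂(o_m)_i = softmax(o_m)_i · ( log(softmax(o_m)_i / softmax(o_n)_i) − L_KL(o_m, o_n) ). -/
open Real

/-- softmax of logits `o : Fin C → ℝ`. -/
noncomputable def softmax {C : ℕ} (o : Fin C → ℝ) (j : Fin C) : ℝ :=
  Real.exp (o j) / ∑ k, Real.exp (o k)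

/-- KL divergence loss between logits `o_m`, `o_n`. -/
noncomputable def LKL {C : ℕ} (om oN : Fin C → ℝ) : ℝ :=
  ∑ j, softmax om j * Real.log (softmax om j / softmax oN j)

/-!
Writing `p = softmax o_m`, `q = softmax o_n` and `ℓ_j = log (p_j / q_j)`, the softmax Jacobian is
`∂p_j/∂(o_m)_i = p_j (δ_ij - p_i)`, and `d (p log (p / q)) = (ℓ + 1) dp`. Hence
`∂h/∂(o_m)_i = ∑_j p_j (δ_ij - p_i) (ℓ_j + 1) = p_i (ℓ_i + 1 - ∑_j p_j (ℓ_j + 1)) = p_i (ℓ_i - L_KL)`,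
the last step because `∑_j p_j = 1`.
-/

open Finset

section Softmax

variable {C : ℕ}

lemma softmax_pos (o : Fin C → ℝ) (j : Fin C) : 0 < softmax o j :=
  div_pos (exp_pos _) (sum_pos (fun _ _ => exp_pos _) ⟨j, mem_univ j⟩)

lemma sum_softmax [NeZero C] (o : Fin C → ℝ) : ∑ j, softmax o j = 1 := by
  simp only [softmax, ← sum_div]
  exact div_self (sum_pos (fun _ _ => exp_pos _) univ_nonempty).ne'

lemma hasDerivAt_softmax_update (o : Fin C → ℝ) (i j : Fin C) :
    HasDerivAt (fun t => softmax (Function.update o i t) j)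
      (softmax o j * ((Pi.single i 1 : Fin C → ℝ) j - softmax o i)) (o i) := by
  have hupdate : ∀ k, HasDerivAt (fun t => Function.update o i t k)
      ((Pi.single i 1 : Fin C → ℝ) k) (o i) :=
    hasDerivAt_pi.1 (hasDerivAt_update o i (o i))
  have hsum : HasDerivAt (fun t => ∑ k, exp (Function.update o i t k)) (exp (o i)) (o i) :=
    (HasDerivAt.fun_sum fun k _ => (hupdate k).exp).congr_deriv (by simp [Pi.single_apply])
  have hZ : ∑ k, exp (o k) ≠ 0 := (sum_pos (fun _ _ => exp_pos _) ⟨j, mem_univ j⟩).ne'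
  have hquot := (hupdate j).exp.div hsum (by simpa only [Function.update_eq_self] using hZ)
  simp only [Function.update_eq_self] at hquot
  refine hquot.congr_deriv ?_
  simp only [softmax]
  field_simp

end Softmax

theorem HasDerivAt.mul_log_div {f : ℝ → ℝ} {f' x : ℝ} (c : ℝ) (hf : HasDerivAt f f' x)
    (hx : f x ≠ 0) (hc : c ≠ 0) :
    HasDerivAt (fun t => f t * Real.log (f t / c)) (f' * (Real.log (f x / c) + 1)) x :=
  (hf.mul ((hf.div_const c).log (div_ne_zero hx hc))).congr_deriv (by field_simp)

theorem sum_mul_single_sub_mul {ι : Type*} [Fintype ι] [DecidableEq ι] (p g : ι → ℝ) (i : ι) :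
    ∑ j, p j * ((Pi.single i 1 : ι → ℝ) j - p i) * g j = p i * (g i - ∑ j, p j * g j) := by
  simp only [mul_sub, sub_mul, sum_sub_distrib, mul_sum]
  simp [Pi.single_apply, mul_comm, mul_left_comm]

theorem kl_partial_deriv_first_alt_general (C : ℕ) (om oN : Fin C → ℝ) (i : Fin C) :
    HasDerivAt (fun t => LKL (Function.update om i t) oN)
      (softmax om i * (Real.log (softmax om i / softmax oN i) - LKL om oN)) (om i) := by
  have : NeZero C := ⟨i.pos.ne'⟩
  have hterms := HasDerivAt.fun_sum fun j (_ : j ∈ univ) =>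
    (hasDerivAt_softmax_update om i j).mul_log_div (softmax oN j)
      (softmax_pos _ j).ne' (softmax_pos oN j).ne'
  simp only [Function.update_eq_self] at hterms
  refine hterms.congr_deriv ?_
  rw [sum_mul_single_sub_mul (softmax om) (fun j => log (softmax om j / softmax oN j) + 1)]
  simp only [mul_add, mul_one, sum_add_distrib, sum_softmax, LKL]
  ring

/-- Partial derivative of `o_m ↦ L_KL(o_m, o_n)` in the alternative form
`∂/∂(o_m)_i = softmax(o_m)_i ⬝ (log(softmax(o_m)_i / softmax(o_n)_i) − L_KL(o_m, o_n))`. -/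
theorem kl_partial_deriv_first_alt (C : ℕ) (hC : 1 ≤ C) (om oN : Fin C → ℝ) (i : Fin C) :
    HasDerivAt (fun t => LKL (Function.update om i t) oN)
      (softmax om i * (Real.log (softmax om i / softmax oN i) - LKL om oN)) (om i) :=
  kl_partial_deriv_first_alt_general C om oN i
end

section
/- Let C ≥ 1, α, β ∈ ℝ, let v ∈ ℝ^{C×C} be symmetric, let c ∈ ℝ^{C×C} be antisymmetric, and let p ∈ ℝ^C be a probability vector (nonnegative entries summing to 1). Define L : ℝ^C → ℝ by L(y) = (α/4) · Σ_{j,k=1}^C v_{j,k} · (c_{j,k} − Δ(y)_{j,k})² − β · Σ_{j=1}^C p_j · log softmax(y)_j. Then for every y ∈ ℝ^C and every index i, ∂L/∂y_i = α · Σ_{j=1}^C v_{i,j} · (Δ(y)_{i,j} − c_{i,j}) + β · (softmax(y)_i − p_i). -/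
open Real

/-!
Since `p` sums to one, `∑ j, p j * log (softmax y j) = ∑ j, p j * y j - log ∑ k, exp (y k)`, whose
partial derivative in `y i` is `p i - softmax y i`. The quadratic term differentiates to
`∑ j, ∑ k, g j k * (δ_{ij} - δ_{ik})` with `g j k = 2 v j k ((y j - y k) - c j k)`; symmetry of `v`
and antisymmetry of `c` make `g` antisymmetric, so both halves of the double sum contribute
`∑ j, g i j` and the factor `α / 4` becomes `α`.
-/

open Finset Function

section

variable {ι : Type*} [DecidableEq ι]

theorem hasDerivAt_update_apply (y : ι → ℝ) (i j : ι) :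
    HasDerivAt (fun t => update y i t j) ((Pi.single i 1 : ι → ℝ) j) (y i) :=
  hasDerivAt_pi.1 (hasDerivAt_update y i (y i)) j

variable [Fintype ι]

theorem sum_sum_mul_single_sub_single_of_antisymm (g : ι → ι → ℝ)
    (hg : ∀ j k, g k j = -g j k) (i : ι) :
    ∑ j, ∑ k, g j k * ((Pi.single i 1 : ι → ℝ) j - (Pi.single i 1 : ι → ℝ) k) = 2 * ∑ j, g i j := by
  simp only [mul_sub, sum_sub_distrib, Pi.single_apply, mul_ite, mul_one, mul_zero,
    sum_ite_eq', mem_univ, if_true]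
  rw [sum_comm]
  simp only [sum_ite_eq', mem_univ, if_true, hg i, sum_neg_distrib]
  ring

theorem hasDerivAt_sum_sum_sq_update (v c : ι → ι → ℝ) (hv : ∀ j k, v j k = v k j)
    (hc : ∀ j k, c j k = -c k j) (y : ι → ℝ) (i : ι) :
    HasDerivAt (fun t => ∑ j, ∑ k, v j k * (c j k - (update y i t j - update y i t k)) ^ 2)
      (4 * ∑ j, v i j * ((y i - y j) - c i j)) (y i) := by
  set g : ι → ι → ℝ := fun j k => 2 * (v j k * ((y j - y k) - c j k)) with hg_def
  have hg : ∀ j k, g k j = -g j k := fun j k => by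
    simp only [hg_def, hv k j, hc k j]
    ring
  have hterm : ∀ j k, HasDerivAt
      (fun t => v j k * (c j k - (update y i t j - update y i t k)) ^ 2)
      (g j k * ((Pi.single i 1 : ι → ℝ) j - (Pi.single i 1 : ι → ℝ) k)) (y i) := fun j k => by
    have h := (((hasDerivAt_update_apply y i j).fun_sub (hasDerivAt_update_apply y i k)).const_sub
      (c j k) |>.fun_pow 2).const_mul (v j k)
    refine h.congr_deriv ?_
    simp only [hg_def, update_eq_self]
    ring
  refine (HasDerivAt.fun_sum fun j (_ : j ∈ univ) =>
    HasDerivAt.fun_sum fun k (_ : k ∈ univ) => hterm j k).congr_deriv ?_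
  rw [sum_sum_mul_single_sub_single_of_antisymm g hg i, hg_def, ← mul_sum]
  ring

theorem hasDerivAt_sum_mul_update (p y : ι → ℝ) (i : ι) :
    HasDerivAt (fun t => ∑ j, p j * update y i t j) (p i) (y i) := by
  refine (HasDerivAt.fun_sum fun j (_ : j ∈ univ) =>
    (hasDerivAt_update_apply y i j).const_mul (p j)).congr_deriv ?_
  simp [Pi.single_apply]

theorem hasDerivAt_log_sum_exp_update (y : ι → ℝ) (i : ι) :
    HasDerivAt (fun t => log (∑ k, exp (update y i t k))) (exp (y i) / ∑ k, exp (y k)) (y i) := by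
  have hpos : 0 < ∑ k, exp (y k) := sum_pos (fun k _ => exp_pos _) ⟨i, mem_univ i⟩
  have hsum := HasDerivAt.fun_sum fun k (_ : k ∈ univ) => (hasDerivAt_update_apply y i k).exp
  refine (hsum.log (by simpa only [update_eq_self] using hpos.ne')).congr_deriv ?_
  simp [Pi.single_apply]

end

theorem log_softmax {C : ℕ} (o : Fin C → ℝ) (j : Fin C) :
    log (softmax o j) = o j - log (∑ k, exp (o k)) := by
  have hpos : 0 < ∑ k, exp (o k) := sum_pos (fun k _ => exp_pos _) ⟨j, mem_univ j⟩
  rw [softmax, log_div (exp_ne_zero _) hpos.ne', log_exp]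

theorem sum_mul_log_softmax {C : ℕ} (p : Fin C → ℝ) (hp1 : ∑ j, p j = 1) (o : Fin C → ℝ) :
    ∑ j, p j * log (softmax o j) = ∑ j, p j * o j - log (∑ k, exp (o k)) := by
  simp only [log_softmax, mul_sub, sum_sub_distrib, ← sum_mul, hp1, one_mul]

theorem gkl_partial_deriv_general (C : ℕ) (α β : ℝ)
    (v : Fin C → Fin C → ℝ) (hv : ∀ j k, v j k = v k j)
    (c : Fin C → Fin C → ℝ) (hc : ∀ j k, c j k = -c k j)
    (p : Fin C → ℝ) (hp1 : ∑ j, p j = 1)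
    (y : Fin C → ℝ) (i : Fin C) :
    HasDerivAt
      (fun t => (α / 4) * (∑ j, ∑ k,
          v j k * (c j k - ((Function.update y i t) j - (Function.update y i t) k)) ^ 2)
        - β * ∑ j, p j * Real.log (softmax (Function.update y i t) j))
      (α * (∑ j, v i j * ((y i - y j) - c i j)) + β * (softmax y i - p i)) (y i) := by
  simp only [sum_mul_log_softmax p hp1]
  have hquad := (hasDerivAt_sum_sum_sq_update v c hv hc y i).const_mul (α / 4)
  have hce := ((hasDerivAt_sum_mul_update p y i).sub
    (hasDerivAt_log_sum_exp_update y i)).const_mul β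
  refine (hquad.sub hce).congr_deriv ?_
  rw [softmax]
  ring

/-- Gradient of the GKL loss with respect to the student logits `y`:
for `L(y) = (α/4) ∑_{j,k} v_{j,k} (c_{j,k} - (y_j - y_k))² - β ∑ j, p_j log (softmax y)_j`
with symmetric `v`, antisymmetric `c`, and probability vector `p` all fixed,
`∂L/∂y_i = α ∑ j, v_{i,j} ((y_i - y_j) - c_{i,j}) + β (softmax(y)_i - p_i)`. -/
theorem gkl_partial_deriv (C : ℕ) (hC : 1 ≤ C) (α β : ℝ)
    (v : Fin C → Fin C → ℝ) (hv : ∀ j k, v j k = v k j)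
    (c : Fin C → Fin C → ℝ) (hc : ∀ j k, c j k = -c k j)
    (p : Fin C → ℝ) (hp0 : ∀ j, 0 ≤ p j) (hp1 : ∑ j, p j = 1)
    (y : Fin C → ℝ) (i : Fin C) :
    HasDerivAt
      (fun t => (α / 4) * (∑ j, ∑ k,
          v j k * (c j k - ((Function.update y i t) j - (Function.update y i t) k)) ^ 2)
        - β * ∑ j, p j * Real.log (softmax (Function.update y i t) j))
      (α * (∑ j, v i j * ((y i - y j) - c i j)) + β * (softmax y i - p i)) (y i) :=
  gkl_partial_deriv_general C α β v hv c hc p hp1 y i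
end
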